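/- Let b, c, ν, ρ, s ∈ ℂ with Re(ρ) > 0, Re(c) > 0, Re(ν) > -1, |b| < 1 and Re(s+ν) > 0. Then the Mellin transform of z ↦ e^{-z} G_ν^{(b,c)}(z;ρ) satisfies ∫_0^∞ z^{s-1} e^{-z} G_ν^{(b,c)}(z;ρ) dz = (1/(2^ν Γ(ν+1)²)) · Σ_{k=0}^∞ (-b)^k (c;ρ)_{ν+2k} Γ(s+ν+2k) / ((ν+1)_k ((ν+1)/2)_k ((ν+2)/2)_k · 16^k · k!). -/

import Mathlib

/-
Expanding `Γ(ν+k+1) = Γ(ν+1) (ν+1)_k` and, by the duplication identity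
`(ν+1)_{2k} = 4^k ((ν+1)/2)_k ((ν+2)/2)_k`, `Γ(ν+2k+1) = Γ(ν+1) (ν+1)_{2k}`, the function
`G_ν^{(b,c)}(z;ρ)` becomes `(2^ν Γ(ν+1)²)⁻¹ ∑ₖ dₖ z^(ν+2k)`. Against `z^(s-1) e^(-z)` each
term integrates to `dₖ Γ(s+ν+2k)`, so everything rests on integrating termwise, i.e. on the
summability of `∑ₖ |dₖ| Γ(Re s + Re ν + 2k)`. The bounds `|Γ_ρ(x)| ≤ Γ(Re x + 1) / Re ρ`
(from `e^(-u) ≤ 1/u`) and `|(a)_n| ≥ Γ(Re a + n) / Γ(Re a)` dominate it by a real series whose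
ratio of consecutive terms tends to `|b| < 1`.
-/

open Complex MeasureTheory Real Set

/-- Extended Gamma function `Γ_ρ(x) = ∫_0^∞ t^(x-1) e^(-t-ρ/t) dt`. -/
noncomputable def extGamma (ρ x : ℂ) : ℂ :=
  ∫ t in Ioi (0:ℝ), (t:ℂ) ^ (x - 1) * Complex.exp (-(t:ℂ) - ρ / (t:ℂ))

/-- Generalized Pochhammer symbol `(c;ρ)_μ = Γ_ρ(c+μ)/Γ(c)`. -/
noncomputable def genPoch (c ρ μ : ℂ) : ℂ := extGamma ρ (c + μ) / Complex.Gamma c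

/-- Unified four parameter Bessel function `G_ν^{(b,c)}(z;ρ)` with complex order,
powers being principal complex powers. -/
noncomputable def unifiedG (b c ν ρ z : ℂ) : ℂ :=
  ∑' k : ℕ, (-b) ^ k * genPoch c ρ (2 * (k:ℂ) + ν) * (z / 2) ^ (2 * (k:ℂ) + ν) /
    ((k.factorial : ℂ) * Complex.Gamma (ν + (k:ℂ) + 1) * Complex.Gamma (ν + 2 * (k:ℂ) + 1))

/-- Unified four parameter Bessel function with integer order, powers being integer powers. -/
noncomputable def unifiedGInt (b c ρ : ℂ) (ν : ℤ) (z : ℂ) : ℂ :=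
  ∑' k : ℕ, (-b) ^ k * genPoch c ρ (2 * (k:ℂ) + (ν:ℂ)) * (z / 2) ^ (2 * (k:ℤ) + ν) /
    ((k.factorial : ℂ) * Complex.Gamma ((ν:ℂ) + (k:ℂ) + 1) * Complex.Gamma ((ν:ℂ) + 2 * (k:ℂ) + 1))

/-- Pochhammer symbol `(a)_k = Γ(a+k)/Γ(a)`. -/
noncomputable def poch (a : ℂ) (k : ℕ) : ℂ := Complex.Gamma (a + (k:ℂ)) / Complex.Gamma a

/-- Generalized hypergeometric function `₀F₃`. -/
noncomputable def hyp0F3 (a₁ a₂ a₃ w : ℂ) : ℂ :=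
  ∑' k : ℕ, w ^ k / (poch a₁ k * poch a₂ k * poch a₃ k * (k.factorial : ℂ))

/-- Generalized hypergeometric function `₂F₃`. -/
noncomputable def hyp2F3 (a₁ a₂ b₁ b₂ b₃ w : ℂ) : ℂ :=
  ∑' k : ℕ, poch a₁ k * poch a₂ k * w ^ k /
    (poch b₁ k * poch b₂ k * poch b₃ k * (k.factorial : ℂ))

/-- Bessel function of the first kind `J_μ(z)` for real `z > 0`. -/
noncomputable def besselJ (μ : ℂ) (z : ℝ) : ℂ :=
  ∑' k : ℕ, (-1) ^ k * ((z:ℂ) / 2) ^ (2 * (k:ℂ) + μ) /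
    ((k.factorial : ℂ) * Complex.Gamma (μ + (k:ℂ) + 1))

/-- Generalized four parameter spherical Bessel function
`g_ν^{(b,c)}(z;ρ) = √(π/(2z)) · G_{ν+1/2}^{(b,c-1/2)}(z;ρ)`. -/
noncomputable def sphG (b c ν ρ : ℂ) (z : ℝ) : ℂ :=
  (Real.sqrt (π / (2 * z)) : ℂ) * unifiedG b (c - 1/2) (ν + 1/2) ρ (z:ℂ)

/-- Generalized four parameter Bessel-Clifford function
`C_ν^{(b,λ)}(z;ρ) = z^{-ν/2} · G_ν^{(b,λ)}(2√z;ρ)` for real `z > 0`. -/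
noncomputable def cliffC (b lam ν ρ : ℂ) (z : ℝ) : ℂ :=
  (z:ℂ) ^ (-ν / 2) * unifiedG b lam ν ρ ((2 * Real.sqrt z : ℝ) : ℂ)

open Filter Topology
open scoped Nat

lemma poch_zero {a : ℂ} (ha : 0 < a.re) : poch a 0 = 1 := by
  simp [poch, Complex.Gamma_ne_zero_of_re_pos ha]

lemma poch_succ {a : ℂ} (ha : 0 < a.re) (n : ℕ) : poch a (n + 1) = poch a n * (a + n) := by
  have hre : 0 < (a + n).re := by simp only [add_re, natCast_re]; positivity
  have hne : a + n ≠ 0 := fun h => by simp [h] at hre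
  rw [poch, poch, Nat.cast_succ, ← add_assoc, Complex.Gamma_add_one _ hne]
  ring

lemma poch_two_mul {a : ℂ} (ha : 0 < a.re) (n : ℕ) :
    poch a (2 * n) = 4 ^ n * poch (a / 2) n * poch ((a + 1) / 2) n := by
  have ha₁ : 0 < (a / 2).re := by simpa using ha
  have ha₂ : 0 < ((a + 1) / 2).re := by simp only [div_ofNat_re, add_re, one_re]; linarith
  induction n with
  | zero => rw [mul_zero, pow_zero, poch_zero ha, poch_zero ha₁, poch_zero ha₂, one_mul, one_mul]
  | succ n ih =>
    rw [show 2 * (n + 1) = 2 * n + 1 + 1 by ring, poch_succ ha, poch_succ ha, ih,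
      poch_succ ha₁, poch_succ ha₂]
    push_cast
    ring

lemma Gamma_re_add_div_Gamma_re_le_norm_poch {a : ℂ} (ha : 0 < a.re) (n : ℕ) :
    Real.Gamma (a.re + n) / Real.Gamma a.re ≤ ‖poch a n‖ := by
  induction n with
  | zero => simp [poch_zero ha, div_self (Real.Gamma_pos_of_pos ha).ne']
  | succ n ih =>
    have hn : 0 < a.re + n := add_pos_of_pos_of_nonneg ha (Nat.cast_nonneg n)
    rw [poch_succ ha, norm_mul, Nat.cast_succ, ← add_assoc, Real.Gamma_add_one hn.ne',
      mul_div_assoc, mul_comm]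
    gcongr
    simpa using Complex.re_le_norm (a + n)

lemma poch_ne_zero {a : ℂ} (ha : 0 < a.re) (n : ℕ) : poch a n ≠ 0 := by
  have hn : 0 < (a + n).re := by simp only [add_re, natCast_re]; positivity
  exact div_ne_zero (Complex.Gamma_ne_zero_of_re_pos hn) (Complex.Gamma_ne_zero_of_re_pos ha)

lemma Gamma_add_natCast_eq_mul_poch {a : ℂ} (ha : 0 < a.re) (n : ℕ) :
    Complex.Gamma (a + n) = Complex.Gamma a * poch a n :=
  (mul_div_cancel₀ _ (Complex.Gamma_ne_zero_of_re_pos ha)).symm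

lemma norm_extGamma_le {ρ x : ℂ} (hρ : 0 < ρ.re) (hx : -1 < x.re) :
    ‖extGamma ρ x‖ ≤ Real.Gamma (x.re + 1) / ρ.re := by
  have hx₁ : 0 < x.re + 1 := by linarith
  rw [Real.Gamma_eq_integral hx₁, ← integral_div]
  refine norm_integral_le_of_norm_le ((Real.GammaIntegral_convergent hx₁).div_const _) ?_
  filter_upwards [ae_restrict_mem measurableSet_Ioi] with t (ht : 0 < t)
  -- `e^{-u} ≤ 1/u` for `u = Re ρ / t` trades the factor `e^{-ρ/t}` for one extra power of `t`
  have hdecay : Real.exp (-(ρ.re / t)) ≤ t / ρ.re := by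
    calc Real.exp (-(ρ.re / t)) = (Real.exp (ρ.re / t))⁻¹ := Real.exp_neg _
      _ ≤ (ρ.re / t)⁻¹ := inv_anti₀ (div_pos hρ ht)
          ((le_add_of_nonneg_right zero_le_one).trans (Real.add_one_le_exp _))
      _ = t / ρ.re := inv_div _ _
  have hnorm : ‖(t:ℂ) ^ (x - 1) * Complex.exp (-(t:ℂ) - ρ / (t:ℂ))‖
      = t ^ (x.re - 1) * (Real.exp (-t) * Real.exp (-(ρ.re / t))) := by
    rw [norm_mul, Complex.norm_cpow_eq_rpow_re_of_pos ht, Complex.norm_exp, ← Real.exp_add]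
    congr 2
    simp only [sub_re, neg_re, ofReal_re, div_ofReal_re]
    ring
  rw [hnorm]
  calc t ^ (x.re - 1) * (Real.exp (-t) * Real.exp (-(ρ.re / t)))
      ≤ t ^ (x.re - 1) * (Real.exp (-t) * (t / ρ.re)) := by gcongr
    _ = Real.exp (-t) * t ^ (x.re + 1 - 1) / ρ.re := by
        rw [show x.re + 1 - 1 = (x.re - 1) + 1 by ring, Real.rpow_add_one ht.ne']
        ring

lemma norm_genPoch_le {c ρ μ : ℂ} (hρ : 0 < ρ.re) (hμ : -1 < (c + μ).re) :
    ‖genPoch c ρ μ‖ ≤ Real.Gamma ((c + μ).re + 1) / (ρ.re * ‖Complex.Gamma c‖) := by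
  rw [genPoch, norm_div, ← div_div]
  gcongr
  exact norm_extGamma_le hρ hμ

lemma integral_cpow_mul_exp_mul_tsum_cpow {s : ℂ} {a w : ℕ → ℂ} (hw : ∀ k, 0 < (s + w k).re)
    (hsum : Summable fun k => ‖a k‖ * Real.Gamma (s + w k).re) :
    ∫ z in Ioi (0:ℝ), (z:ℂ) ^ (s - 1) * Complex.exp (-(z:ℂ)) * ∑' k, a k * (z:ℂ) ^ w k =
      ∑' k, a k * Complex.Gamma (s + w k) := by
  set F : ℕ → ℝ → ℂ := fun k z => a k * (Real.exp (-z) * (z:ℂ) ^ (s + w k - 1))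
  have hF_int (k : ℕ) : IntegrableOn (F k) (Ioi 0) :=
    (Complex.GammaIntegral_convergent (hw k)).const_mul (a k)
  have hF_norm (k : ℕ) : ∫ z in Ioi (0:ℝ), ‖F k z‖ = ‖a k‖ * Real.Gamma (s + w k).re := by
    rw [Real.Gamma_eq_integral (hw k), ← integral_const_mul]
    refine setIntegral_congr_fun measurableSet_Ioi fun z (hz : 0 < z) => ?_
    simp [F, Complex.norm_cpow_eq_rpow_re_of_pos hz, Complex.norm_exp]
  have hF_eq (k : ℕ) : ∫ z in Ioi (0:ℝ), F k z = a k * Complex.Gamma (s + w k) := by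
    rw [integral_const_mul, Complex.Gamma_eq_integral (hw k)]
    rfl
  calc ∫ z in Ioi (0:ℝ), (z:ℂ) ^ (s - 1) * Complex.exp (-(z:ℂ)) * ∑' k, a k * (z:ℂ) ^ w k
      = ∫ z in Ioi (0:ℝ), ∑' k, F k z := by
        refine setIntegral_congr_fun measurableSet_Ioi fun z (hz : 0 < z) => ?_
        rw [← tsum_mul_left]
        refine tsum_congr fun k => ?_
        simp only [F]
        rw [show s + w k - 1 = (s - 1) + w k by ring,
          Complex.cpow_add _ _ (Complex.ofReal_ne_zero.mpr hz.ne'), Complex.ofReal_exp]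
        push_cast
        ring
    _ = ∑' k, ∫ z in Ioi (0:ℝ), F k z :=
        (integral_tsum_of_summable_integral_norm hF_int (by simpa only [hF_norm] using hsum)).symm
    _ = ∑' k, a k * Complex.Gamma (s + w k) := tsum_congr hF_eq

lemma summable_of_succ_eq_mul {f q : ℕ → ℝ} {l : ℝ} (hl : |l| < 1)
    (hq : Tendsto q atTop (𝓝 l)) (hf : ∀ n, f (n + 1) = q n * f n) : Summable f := by
  obtain ⟨r, hlr, hr⟩ := exists_between hl
  refine summable_of_ratio_norm_eventually_le hr ?_
  filter_upwards [hq.abs.eventually (gt_mem_nhds hlr)] with n hn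
  rw [hf, norm_mul, Real.norm_eq_abs (q n)]
  exact mul_le_mul_of_nonneg_right hn.le (norm_nonneg _)

lemma Real.Gamma_add_two_mul_succ {y : ℝ} (hy : 0 < y) (n : ℕ) :
    Real.Gamma (y + 2 * ((n:ℝ) + 1)) = (y + 2 * n) * (y + 2 * n + 1) * Real.Gamma (y + 2 * n) := by
  have hn : 0 < y + 2 * n := by positivity
  rw [show y + 2 * ((n:ℝ) + 1) = (y + 2 * n + 1) + 1 by ring, Real.Gamma_add_one (by positivity),
    Real.Gamma_add_one hn.ne']
  ring

lemma summable_pow_mul_Gamma_mul_Gamma_div {x β γ σ : ℝ} (hx₀ : 0 ≤ x) (hx : x < 1)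
    (hβ : 0 < β) (hγ : 0 < γ) (hσ : 0 < σ) :
    Summable fun k : ℕ => x ^ k * Real.Gamma (γ + 2 * k) * Real.Gamma (σ + 2 * k) /
      (k ! * Real.Gamma (β + k) * Real.Gamma (β + 2 * k) * 4 ^ k) := by
  refine summable_of_succ_eq_mul (l := x)
    (q := fun n : ℕ => x * ((γ + 2 * n) / (β + 2 * n)) * ((γ + 1 + 2 * n) / (β + 1 + 2 * n)) *
      ((σ + 2 * n) / (2 + 2 * n)) * ((σ + 1 + 2 * n) / (2 * β + 2 * n)))
    (by rwa [abs_of_nonneg hx₀]) ?_ fun n => ?_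
  · have h := (((tendsto_const_nhds (x := x)).mul
      (tendsto_add_mul_div_add_mul_atTop_nhds γ β 2 two_ne_zero)).mul
      (tendsto_add_mul_div_add_mul_atTop_nhds (γ + 1) (β + 1) 2 two_ne_zero)).mul
      (tendsto_add_mul_div_add_mul_atTop_nhds σ 2 2 two_ne_zero) |>.mul
      (tendsto_add_mul_div_add_mul_atTop_nhds (σ + 1) (2 * β) 2 two_ne_zero)
    simpa using h
  · have hΓβ : 0 < Real.Gamma (β + n) := Real.Gamma_pos_of_pos (by positivity)
    have hΓβ₂ : 0 < Real.Gamma (β + 2 * n) := Real.Gamma_pos_of_pos (by positivity)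
    have hβn : 0 < β + n := by positivity
    push_cast
    rw [Real.Gamma_add_two_mul_succ hγ, Real.Gamma_add_two_mul_succ hσ,
      Real.Gamma_add_two_mul_succ hβ, ← add_assoc, Real.Gamma_add_one hβn.ne', Nat.factorial_succ,
      pow_succ, pow_succ]
    push_cast
    field_simp
    ring

lemma two_cpow_two_mul_natCast_add (k : ℕ) (ν : ℂ) : (2:ℂ) ^ (2 * (k:ℂ) + ν) = 4 ^ k * 2 ^ ν := by
  rw [Complex.cpow_add _ _ two_ne_zero, show 2 * (k:ℂ) = ((2 * k : ℕ) : ℂ) by push_cast; ring,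
    Complex.cpow_natCast, pow_mul]
  norm_num

noncomputable def unifiedGCoeff (b c ν ρ : ℂ) (k : ℕ) : ℂ :=
  (-b) ^ k * genPoch c ρ (ν + 2 * (k:ℂ)) /
    (poch (ν + 1) k * poch ((ν + 1) / 2) k * poch ((ν + 2) / 2) k * 16 ^ k * (k ! : ℂ))

lemma re_add_add_two_mul_natCast (s ν : ℂ) (k : ℕ) :
    (s + (ν + 2 * (k:ℂ))).re = s.re + ν.re + 2 * k := by
  simp only [add_re, mul_re, re_ofNat, natCast_re, im_ofNat, natCast_im, mul_zero, sub_zero]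
  ring

lemma re_add_add_two_mul_natCast_pos {s ν : ℂ} (hs : 0 < (s + ν).re) (k : ℕ) :
    0 < (s + (ν + 2 * (k:ℂ))).re := by
  rw [re_add_add_two_mul_natCast, ← add_re]
  positivity

section unifiedG

variable {b c ν ρ : ℂ}

lemma poch_mul_poch_two_mul (hν : -1 < ν.re) (k : ℕ) :
    poch (ν + 1) k * poch ((ν + 1) / 2) k * poch ((ν + 2) / 2) k * 16 ^ k =
      poch (ν + 1) k * poch (ν + 1) (2 * k) * 4 ^ k := by
  rw [poch_two_mul (by rw [add_re, one_re]; linarith), show (ν + 1 + 1) / 2 = (ν + 2) / 2 by ring,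
    show (16:ℂ) = 4 * 4 by norm_num, mul_pow]
  ring

lemma unifiedG_eq_mul_tsum (hν : -1 < ν.re) {z : ℝ} (hz : 0 < z) :
    unifiedG b c ν ρ z = 1 / ((2:ℂ) ^ ν * Complex.Gamma (ν + 1) ^ 2) *
      ∑' k : ℕ, unifiedGCoeff b c ν ρ k * (z:ℂ) ^ (ν + 2 * (k:ℂ)) := by
  have hν₁ : 0 < (ν + 1).re := by rw [add_re, one_re]; linarith
  have hν₂ : 0 < ((ν + 1) / 2).re := by simp only [div_ofNat_re, add_re, one_re]; linarith
  have hν₃ : 0 < ((ν + 2) / 2).re := by simp only [div_ofNat_re, add_re, re_ofNat]; linarith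
  rw [unifiedG, ← tsum_mul_left]
  refine tsum_congr fun k => ?_
  have hΓk : Complex.Gamma (ν + k + 1) = Complex.Gamma (ν + 1) * poch (ν + 1) k := by
    rw [← Gamma_add_natCast_eq_mul_poch hν₁, add_right_comm]
  have hΓ2k : Complex.Gamma (ν + 2 * k + 1) =
      Complex.Gamma (ν + 1) * (4 ^ k * poch ((ν + 1) / 2) k * poch ((ν + 2) / 2) k) := by
    rw [← show (ν + 1 + 1) / 2 = (ν + 2) / 2 by ring, ← poch_two_mul hν₁,
      ← Gamma_add_natCast_eq_mul_poch hν₁]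
    push_cast
    rw [add_right_comm]
  have hpow : ((z:ℂ) / 2) ^ (2 * (k:ℂ) + ν) = (z:ℂ) ^ (ν + 2 * (k:ℂ)) / (4 ^ k * 2 ^ ν) := by
    rw [← two_cpow_two_mul_natCast_add, ← Complex.ofReal_ofNat,
      Complex.div_cpow_ofReal_nonneg hz.le zero_le_two, add_comm]
  have hΓ := Complex.Gamma_ne_zero_of_re_pos hν₁
  have hp₁ := poch_ne_zero hν₁ k
  have hp₂ := poch_ne_zero hν₂ k
  have hp₃ := poch_ne_zero hν₃ k
  have h2ν : (2:ℂ) ^ ν ≠ 0 := by simp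
  rw [hΓk, hΓ2k, hpow, unifiedGCoeff, add_comm (2 * (k:ℂ)) ν,
    show (16:ℂ) = 4 * 4 by norm_num, mul_pow]
  field_simp

lemma norm_unifiedGCoeff_le (hρ : 0 < ρ.re) (hc : 0 < c.re) (hν : -1 < ν.re) (k : ℕ) :
    ‖unifiedGCoeff b c ν ρ k‖ ≤ Real.Gamma (ν.re + 1) ^ 2 / (ρ.re * ‖Complex.Gamma c‖) *
      (‖b‖ ^ k * Real.Gamma (c.re + ν.re + 1 + 2 * k) /
        (k ! * Real.Gamma (ν.re + 1 + k) * Real.Gamma (ν.re + 1 + 2 * k) * 4 ^ k)) := by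
  have hν₁ : 0 < (ν + 1).re := by rw [add_re, one_re]; linarith
  have hΓ : 0 < Real.Gamma (ν.re + 1) := Real.Gamma_pos_of_pos (by linarith)
  have hΓk : 0 < Real.Gamma (ν.re + 1 + k) := Real.Gamma_pos_of_pos (by positivity)
  have hΓ2k : 0 < Real.Gamma (ν.re + 1 + 2 * k) := Real.Gamma_pos_of_pos (by positivity)
  have hΓγ : 0 < Real.Gamma (c.re + ν.re + 1 + 2 * k) := Real.Gamma_pos_of_pos (by
    linarith [k.cast_nonneg (α := ℝ)])
  have hgen : ‖genPoch c ρ (ν + 2 * (k:ℂ))‖ ≤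
      Real.Gamma (c.re + ν.re + 1 + 2 * k) / (ρ.re * ‖Complex.Gamma c‖) := by
    have := norm_genPoch_le (c := c) (μ := ν + 2 * (k:ℂ)) hρ
      (by rw [re_add_add_two_mul_natCast]; linarith [k.cast_nonneg (α := ℝ)])
    rwa [re_add_add_two_mul_natCast, add_right_comm] at this
  have hden : Real.Gamma (ν.re + 1 + k) / Real.Gamma (ν.re + 1) *
      (Real.Gamma (ν.re + 1 + 2 * k) / Real.Gamma (ν.re + 1)) * 4 ^ k * k ! ≤
      ‖poch (ν + 1) k * poch ((ν + 1) / 2) k * poch ((ν + 2) / 2) k * 16 ^ k * (k ! : ℂ)‖ := by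
    rw [poch_mul_poch_two_mul hν, norm_mul, norm_mul, norm_mul, norm_pow, Complex.norm_natCast]
    have h2k := Gamma_re_add_div_Gamma_re_le_norm_poch hν₁ (2 * k)
    push_cast at h2k
    gcongr
    · simpa using Gamma_re_add_div_Gamma_re_le_norm_poch hν₁ k
    · simpa using h2k
    · norm_num
  calc ‖unifiedGCoeff b c ν ρ k‖
      = ‖b‖ ^ k * ‖genPoch c ρ (ν + 2 * (k:ℂ))‖ /
          ‖poch (ν + 1) k * poch ((ν + 1) / 2) k * poch ((ν + 2) / 2) k * 16 ^ k * (k ! : ℂ)‖ := by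
        rw [unifiedGCoeff, norm_div, norm_mul, norm_pow, norm_neg]
    _ ≤ ‖b‖ ^ k * (Real.Gamma (c.re + ν.re + 1 + 2 * k) / (ρ.re * ‖Complex.Gamma c‖)) /
          (Real.Gamma (ν.re + 1 + k) / Real.Gamma (ν.re + 1) *
            (Real.Gamma (ν.re + 1 + 2 * k) / Real.Gamma (ν.re + 1)) * 4 ^ k * k !) := by
        gcongr
    _ = _ := by field_simp

lemma summable_norm_unifiedGCoeff_mul_Gamma (hρ : 0 < ρ.re) (hc : 0 < c.re) (hν : -1 < ν.re)
    (hb : ‖b‖ < 1) {s : ℂ} (hs : 0 < (s + ν).re) :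
    Summable fun k : ℕ => ‖unifiedGCoeff b c ν ρ k‖ * Real.Gamma (s + (ν + 2 * (k:ℂ))).re := by
  have hmajor := (summable_pow_mul_Gamma_mul_Gamma_div (norm_nonneg b) hb
    (show 0 < ν.re + 1 by linarith) (show 0 < c.re + ν.re + 1 by linarith)
    (show 0 < s.re + ν.re by simpa using hs)).mul_left
      (Real.Gamma (ν.re + 1) ^ 2 / (ρ.re * ‖Complex.Gamma c‖))
  have hΓ (k : ℕ) : 0 < Real.Gamma (s + (ν + 2 * (k:ℂ))).re :=
    Real.Gamma_pos_of_pos (re_add_add_two_mul_natCast_pos hs k)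
  refine hmajor.of_nonneg_of_le (fun k => mul_nonneg (norm_nonneg _) (hΓ k).le) fun k => ?_
  calc ‖unifiedGCoeff b c ν ρ k‖ * Real.Gamma (s + (ν + 2 * (k:ℂ))).re
      ≤ Real.Gamma (ν.re + 1) ^ 2 / (ρ.re * ‖Complex.Gamma c‖) *
          (‖b‖ ^ k * Real.Gamma (c.re + ν.re + 1 + 2 * k) /
            (k ! * Real.Gamma (ν.re + 1 + k) * Real.Gamma (ν.re + 1 + 2 * k) * 4 ^ k)) *
          Real.Gamma (s + (ν + 2 * (k:ℂ))).re :=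
        mul_le_mul_of_nonneg_right (norm_unifiedGCoeff_le hρ hc hν k) (hΓ k).le
    _ = _ := by
        rw [re_add_add_two_mul_natCast]
        ring

end unifiedG

theorem stmt5 (b c ν ρ s : ℂ) (hρ : 0 < ρ.re) (hc : 0 < c.re) (hν : -1 < ν.re)
    (hb : ‖b‖ < 1) (hs : 0 < (s + ν).re) :
    (∫ z in Ioi (0:ℝ), (z:ℂ) ^ (s - 1) * Complex.exp (-(z:ℂ)) * unifiedG b c ν ρ (z:ℂ)) =
      1 / ((2:ℂ) ^ ν * Complex.Gamma (ν + 1) ^ 2) *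
        ∑' k : ℕ, (-b) ^ k * genPoch c ρ (ν + 2 * (k:ℂ)) * Complex.Gamma (s + ν + 2 * (k:ℂ)) /
          (poch (ν + 1) k * poch ((ν + 1) / 2) k * poch ((ν + 2) / 2) k *
            16 ^ k * (k.factorial : ℂ)) := by
  calc (∫ z in Ioi (0:ℝ), (z:ℂ) ^ (s - 1) * Complex.exp (-(z:ℂ)) * unifiedG b c ν ρ (z:ℂ))
      = ∫ z in Ioi (0:ℝ), 1 / ((2:ℂ) ^ ν * Complex.Gamma (ν + 1) ^ 2) *
          ((z:ℂ) ^ (s - 1) * Complex.exp (-(z:ℂ)) *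
            ∑' k : ℕ, unifiedGCoeff b c ν ρ k * (z:ℂ) ^ (ν + 2 * (k:ℂ))) := by
        refine setIntegral_congr_fun measurableSet_Ioi fun z (hz : 0 < z) => ?_
        rw [unifiedG_eq_mul_tsum hν hz]
        ring
    _ = 1 / ((2:ℂ) ^ ν * Complex.Gamma (ν + 1) ^ 2) *
          ∑' k : ℕ, unifiedGCoeff b c ν ρ k * Complex.Gamma (s + (ν + 2 * (k:ℂ))) := by
        rw [integral_const_mul, integral_cpow_mul_exp_mul_tsum_cpow
          (re_add_add_two_mul_natCast_pos hs)
          (summable_norm_unifiedGCoeff_mul_Gamma hρ hc hν hb hs)]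
    _ = _ := by
        congr 1
        refine tsum_congr fun k => ?_
        rw [unifiedGCoeff, ← add_assoc, div_mul_eq_mul_div, mul_comm _ (k.factorial : ℂ)]
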